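/- arXiv:1908.11169 — 2 statements merged into one kernel-verified Lean document; each statement's English description precedes it below -/
import Mathlib

section
/- A functor F : psh(C) → psh(C) is familial if and only if every morphism g : Y → F(X) admits a generic-free factorisation Y → F(A) → F(X), i.e., g = F(φ) ∘ ξ with ξ F-generic. -/
/-!
A familial `F` writes `F X (c)` as `Σ o ∈ P(c), Hom(E(c, o), X)`. Given `g : Y ⟶ F X`, let
`ψ : Y ⟶ P` record the indices of its components; the remaining components are maps
`E(c, ψ y) ⟶ X` forming a cocone, so `g` factors through `L = colim_{(c, y) ∈ el Y} E(c, ψ y)`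
via the map `ξ : Y ⟶ F L` assembled from the colimit injections. Maps `Y ⟶ F W` with indices `ψ`
correspond exactly to maps `L ⟶ W`, and this universality among maps of a fixed shape already
implies genericity.

Conversely, generic factorisations of the points `yoneda c ⟶ F 1` provide the arities `E(c, o)`.
Genericity against maps into `1` makes the transition maps of `E` unique, hence functorial, and
makes `(o, f) ↦ ξ_o ≫ F f` a bijection onto `F X (c)`.
-/

open CategoryTheory Limits Opposite

/-- A familial endofunctor on a presheaf category: `F(X)(c) ≅ Σ_{o ∈ F(1)(c)} Hom(E(c,o), X)`,
naturally in `X` and `c`, for some arity functor `E` on the category of elements of `F(1)`. -/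
def IsFamilial {C : Type} [SmallCategory C] (F : (Cᵒᵖ ⥤ Type) ⥤ (Cᵒᵖ ⥤ Type)) : Prop :=
  ∃ (E : ((F.obj (⊤_ (Cᵒᵖ ⥤ Type))).Elements)ᵒᵖ ⥤ (Cᵒᵖ ⥤ Type))
    (i : ∀ (X : Cᵒᵖ ⥤ Type) (c : Cᵒᵖ), (F.obj X).obj c ≃
      Σ o : (F.obj (⊤_ (Cᵒᵖ ⥤ Type))).obj c, (E.obj (op ((F.obj (⊤_ (Cᵒᵖ ⥤ Type))).elementsMk c o)) ⟶ X)),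
    (∀ (X Y : Cᵒᵖ ⥤ Type) (f : X ⟶ Y) (c : Cᵒᵖ) (x : (F.obj X).obj c),
      i Y c ((F.map f).app c x) = ⟨(i X c x).1, (i X c x).2 ≫ f⟩) ∧
    (∀ (X : Cᵒᵖ ⥤ Type) (c c' : Cᵒᵖ) (g : c ⟶ c') (x : (F.obj X).obj c),
      i X c' ((F.obj X).map g x) =
        ⟨(F.obj (⊤_ (Cᵒᵖ ⥤ Type))).map g (i X c x).1,
          E.map (Quiver.Hom.op
            (⟨g, rfl⟩ : (F.obj (⊤_ (Cᵒᵖ ⥤ Type))).elementsMk c (i X c x).1 ⟶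
              (F.obj (⊤_ (Cᵒᵖ ⥤ Type))).elementsMk c'
                ((F.obj (⊤_ (Cᵒᵖ ⥤ Type))).map g (i X c x).1))) ≫ (i X c x).2⟩)

/-- A morphism `ξ : Y ⟶ F(A)` is `F`-generic when every commuting square
`χ ≫ F(h) = ξ ≫ F(k)` admits a unique strong lifting `l` with `ξ ≫ F(l) = χ` and `l ≫ h = k`. -/
def IsGeneric {C D : Type*} [Category C] [Category D] (F : C ⥤ D) {Y : D} {A : C}
    (ξ : Y ⟶ F.obj A) : Prop :=
  ∀ {B Z : C} (χ : Y ⟶ F.obj B) (h : B ⟶ Z) (k : A ⟶ Z),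
    χ ≫ F.map h = ξ ≫ F.map k →
      ∃! l : A ⟶ B, ξ ≫ F.map l = χ ∧ l ≫ h = k

universe u v

section Universal

variable {A : Type u} [Category.{v} A] {D : Type*} [Category D] {F : A ⥤ D}

def IsUniversal {S : D} (q : F ⟶ (Functor.const A).obj S) {Y : D} {B : A}
    (ξ : Y ⟶ F.obj B) : Prop :=
  ∀ ⦃W : A⦄ (χ : Y ⟶ F.obj W), χ ≫ q.app W = ξ ≫ q.app B → ∃! l : B ⟶ W, ξ ≫ F.map l = χ

variable {S : D} {q : F ⟶ (Functor.const A).obj S} {Y : D} {B : A} {ξ : Y ⟶ F.obj B}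

theorem map_comp_app_const (q : F ⟶ (Functor.const A).obj S) {W W' : A} (u : W ⟶ W') :
    F.map u ≫ q.app W' = q.app W := by
  simp

theorem IsUniversal.hom_ext (hξ : IsUniversal q ξ) {W : A} {l l' : B ⟶ W}
    (h : ξ ≫ F.map l = ξ ≫ F.map l') : l = l' :=
  (hξ (ξ ≫ F.map l') (by simp)).unique h rfl

theorem IsUniversal.isGeneric (hξ : IsUniversal q ξ) : IsGeneric F ξ := by
  intro B' Z χ h k hsq
  have hχ : χ ≫ q.app B' = ξ ≫ q.app B := by
    rw [← map_comp_app_const q h, reassoc_of% hsq, map_comp_app_const]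
  obtain ⟨l, hl, hl_unique⟩ := hξ χ hχ
  refine ⟨l, ⟨hl, hξ.hom_ext ?_⟩, fun l' hl' => hl_unique l' hl'.1⟩
  rw [F.map_comp, reassoc_of% hl, hsq]

noncomputable def terminalProjection (F : A ⥤ D) [HasTerminal A] :
    F ⟶ (Functor.const A).obj (F.obj (⊤_ A)) where
  app W := F.map (terminal.from W)
  naturality W W' u := by simp [← F.map_comp]

theorem IsGeneric.isUniversal [HasTerminal A] (hξ : IsGeneric F ξ) :
    IsUniversal (terminalProjection F) ξ := fun W χ hχ =>
  (hξ χ (terminal.from W) (terminal.from B) hχ).imp fun _ hl =>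
    ⟨hl.1.1, fun l' hl' => hl.2 l' ⟨hl', terminal.hom_ext _ _⟩⟩

end Universal

namespace FamilialRepresentation

variable {C : Type} [SmallCategory C] {A : Type u} [Category.{0} A] {F : A ⥤ (Cᵒᵖ ⥤ Type)}
  {P : Cᵒᵖ ⥤ Type} {E : P.Elementsᵒᵖ ⥤ A}
  (i : ∀ (X : A) (c : Cᵒᵖ), (F.obj X).obj c ≃ Σ o : P.obj c, (E.obj (op (P.elementsMk c o)) ⟶ X))
  (hmap : ∀ (X Y : A) (f : X ⟶ Y) (c : Cᵒᵖ) (x : (F.obj X).obj c),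
    i Y c ((F.map f).app c x) = ⟨(i X c x).1, (i X c x).2 ≫ f⟩)
  (hobj : ∀ (X : A) (c c' : Cᵒᵖ) (g : c ⟶ c') (x : (F.obj X).obj c),
    i X c' ((F.obj X).map g x) =
      ⟨P.map g (i X c x).1,
        E.map (Quiver.Hom.op (⟨g, rfl⟩ : P.elementsMk c (i X c x).1 ⟶
          P.elementsMk c' (P.map g (i X c x).1))) ≫ (i X c x).2⟩)

include hmap in
theorem map_app_symm {X W : A} (u : X ⟶ W) {c : Cᵒᵖ} (o : P.obj c)
    (f : E.obj (op (P.elementsMk c o)) ⟶ X) :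
    (F.map u).app c ((i X c).symm ⟨o, f⟩) = (i W c).symm ⟨o, f ≫ u⟩ := by
  rw [Equiv.eq_symm_apply, hmap, Equiv.apply_symm_apply]

-- `o'` is kept general: in applications it is only propositionally equal to `P.map γ o`.
include hobj in
theorem obj_map_symm (X : A) {c c' : Cᵒᵖ} (γ : c ⟶ c') {o : P.obj c} {o' : P.obj c'}
    (h : P.map γ o = o') (f : E.obj (op (P.elementsMk c o)) ⟶ X) :
    (F.obj X).map γ ((i X c).symm ⟨o, f⟩) =
      (i X c').symm
        ⟨o', E.map (Quiver.Hom.op (⟨γ, h⟩ : P.elementsMk c o ⟶ P.elementsMk c' o')) ≫ f⟩ := by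
  subst h
  rw [Equiv.eq_symm_apply, hobj, Equiv.apply_symm_apply]

theorem symm_mk_injective {X : A} {c : Cᵒᵖ} {o : P.obj c} {f f' : E.obj (op (P.elementsMk c o)) ⟶ X}
    (h : (i X c).symm ⟨o, f⟩ = (i X c).symm ⟨o, f'⟩) : f = f' :=
  eq_of_heq (Sigma.mk.inj_iff.mp ((i X c).symm.injective h)).2

theorem exists_symm_mk_eq {X : A} {c : Cᵒᵖ} {x : (F.obj X).obj c} {o : P.obj c}
    (h : (i X c x).1 = o) : ∃ f, (i X c).symm ⟨o, f⟩ = x := by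
  subst h
  exact ⟨(i X c x).2, (i X c).symm_apply_apply x⟩

def shape : F ⟶ (Functor.const A).obj P where
  app X :=
    { app c := TypeCat.ofHom fun x => (i X c x).1
      naturality c c' γ := by
        ext x
        exact congrArg Sigma.fst (hobj X c c' γ x) }
  naturality X W u := by
    ext c x
    exact congrArg Sigma.fst (hmap X W u c x)

abbrev diagram (E : P.Elementsᵒᵖ ⥤ A) {Y : Cᵒᵖ ⥤ Type} (ψ : Y ⟶ P) : Y.Elementsᵒᵖ ⥤ A :=
  (CategoryOfElements.map ψ).op ⋙ E

noncomputable def unit {Y : Cᵒᵖ ⥤ Type} (ψ : Y ⟶ P) [HasColimit (diagram E ψ)] :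
    Y ⟶ F.obj (colimit (diagram E ψ)) where
  app c := TypeCat.ofHom fun y =>
    (i _ c).symm ⟨ψ.app c y, colimit.ι (diagram E ψ) (op (Y.elementsMk c y))⟩
  naturality c c' γ := by
    ext y
    refine (congrArg (fun f => (i _ c').symm ⟨_, f⟩) (colimit.w (diagram E ψ)
      (Quiver.Hom.op (⟨γ, rfl⟩ : Y.elementsMk c y ⟶ Y.elementsMk c' (Y.map γ y))))).symm.trans ?_
    exact (obj_map_symm i hobj _ γ _ _).symm

section Unit

variable {Y : Cᵒᵖ ⥤ Type} (ψ : Y ⟶ P) [HasColimit (diagram E ψ)]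

theorem unit_comp_shape : unit i hobj ψ ≫ (shape i hmap hobj).app _ = ψ := by
  ext c y
  exact congrArg Sigma.fst ((i _ c).apply_symm_apply _)

include hmap in
theorem unit_comp_map_app {W : A} (l : colimit (diagram E ψ) ⟶ W) (c : Cᵒᵖ) (y : Y.obj c) :
    (unit i hobj ψ ≫ F.map l).app c y =
      (i W c).symm ⟨ψ.app c y, colimit.ι (diagram E ψ) (op (Y.elementsMk c y)) ≫ l⟩ :=
  map_app_symm i hmap l _ _

theorem unit_isUniversal : IsUniversal (shape i hmap hobj) (unit i hobj ψ) := by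
  intro W χ hχ
  rw [unit_comp_shape] at hχ
  choose s hs using fun c y =>
    exists_symm_mk_eq i (congrArg (fun τ => τ.app c y) hχ)
  have hcompat : ∀ {a b : Y.Elements} (m : a ⟶ b),
      E.map ((CategoryOfElements.map ψ).map m).op ≫ s a.1 a.2 = s b.1 b.2 := by
    intro a b m
    apply symm_mk_injective i
    calc (i W b.1).symm ⟨ψ.app b.1 b.2, E.map ((CategoryOfElements.map ψ).map m).op ≫ s a.1 a.2⟩
        = (F.obj W).map m.1 ((i W a.1).symm ⟨ψ.app a.1 a.2, s a.1 a.2⟩) :=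
          (obj_map_symm i hobj W m.1 ((CategoryOfElements.map ψ).map m).2 _).symm
      _ = (F.obj W).map m.1 (χ.app a.1 a.2) := congrArg _ (hs _ _)
      _ = χ.app b.1 b.2 := by rw [← NatTrans.naturality_apply, m.2]
      _ = (i W b.1).symm ⟨ψ.app b.1 b.2, s b.1 b.2⟩ := (hs _ _).symm
  let cocone : Cocone (diagram E ψ) :=
    { pt := W
      ι :=
        { app j := s j.unop.1 j.unop.2
          naturality j j' f := (hcompat f.unop).trans (Category.comp_id _).symm } }
  refine ⟨colimit.desc _ cocone, ?_, fun l hl => colimit.hom_ext fun ⟨c, y⟩ => ?_⟩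
  · ext c y
    exact (unit_comp_map_app i hmap hobj ψ _ c y).trans
      ((congrArg (fun f => (i W c).symm ⟨ψ.app c y, f⟩) (colimit.ι_desc cocone _)).trans (hs c y))
  · rw [colimit.ι_desc]
    exact symm_mk_injective i ((unit_comp_map_app i hmap hobj ψ l c y).symm.trans
      ((congrArg (fun τ => τ.app c y) hl).trans (hs c y).symm))

end Unit

include hmap hobj in
theorem exists_isGeneric_factorization [HasColimits A] {X : A} {Y : Cᵒᵖ ⥤ Type}
    (g : Y ⟶ F.obj X) :
    ∃ (B : A) (ξ : Y ⟶ F.obj B) (φ : B ⟶ X), IsGeneric F ξ ∧ ξ ≫ F.map φ = g := by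
  have hu := unit_isUniversal i hmap hobj (g ≫ (shape i hmap hobj).app X)
  obtain ⟨φ, hφ, -⟩ := hu g (by rw [unit_comp_shape])
  exact ⟨_, _, φ, hu.isGeneric, hφ⟩

end FamilialRepresentation

namespace GenericArity

variable {C : Type} [SmallCategory C] {A : Type u} [Category.{0} A] [HasTerminal A]
  {F : A ⥤ (Cᵒᵖ ⥤ Type)} {B : ∀ c : Cᵒᵖ, (F.obj (⊤_ A)).obj c → A}
  (ξ : ∀ (c : Cᵒᵖ) (o : (F.obj (⊤_ A)).obj c), yoneda.obj c.unop ⟶ F.obj (B c o))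
  (hξ : ∀ c o, IsUniversal (terminalProjection F) (ξ c o))
  (hξo : ∀ c o, ξ c o ≫ F.map (terminal.from _) = yonedaEquiv.symm o)

include hξ hξo in
theorem exists_transition {a b : (F.obj (⊤_ A)).Elements} (m : a ⟶ b) :
    ∃ l : B b.1 b.2 ⟶ B a.1 a.2, ξ b.1 b.2 ≫ F.map l = yoneda.map m.1.unop ≫ ξ a.1 a.2 :=
  (hξ b.1 b.2 _ (by
    change _ ≫ F.map _ = _ ≫ F.map _
    rw [Category.assoc, hξo, hξo, ← yonedaEquiv_symm_map, m.2])).exists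

noncomputable def transition {a b : (F.obj (⊤_ A)).Elements} (m : a ⟶ b) :
    B b.1 b.2 ⟶ B a.1 a.2 :=
  (exists_transition ξ hξ hξo m).choose

theorem transition_spec {a b : (F.obj (⊤_ A)).Elements} (m : a ⟶ b) :
    ξ b.1 b.2 ≫ F.map (transition ξ hξ hξo m) = yoneda.map m.1.unop ≫ ξ a.1 a.2 :=
  (exists_transition ξ hξ hξo m).choose_spec

noncomputable def arity : (F.obj (⊤_ A)).Elementsᵒᵖ ⥤ A where
  obj x := B x.unop.1 x.unop.2
  map f := transition ξ hξ hξo f.unop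
  map_id x := (hξ _ _).hom_ext (by simp [transition_spec])
  map_comp f g := (hξ _ _).hom_ext (by
    rw [transition_spec, F.map_comp, ← Category.assoc, transition_spec, Category.assoc,
      transition_spec, ← Category.assoc, ← yoneda.map_comp]
    rfl)

def decode (X : A) (c : Cᵒᵖ) (w : Σ o : (F.obj (⊤_ A)).obj c, (B c o ⟶ X)) : (F.obj X).obj c :=
  yonedaEquiv (ξ c w.1 ≫ F.map w.2)

include hξ hξo in
theorem decode_bijective (X : A) (c : Cᵒᵖ) : Function.Bijective (decode ξ X c) := by
  have hshape : ∀ o (f : B c o ⟶ X),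
      (ξ c o ≫ F.map f) ≫ F.map (terminal.from X) = yonedaEquiv.symm o := fun o f => by
    rw [Category.assoc, ← F.map_comp, terminal.comp_from, hξo]
  constructor
  · rintro ⟨o, f⟩ ⟨o', f'⟩ h
    have h' : ξ c o ≫ F.map f = ξ c o' ≫ F.map f' := yonedaEquiv.injective h
    obtain rfl : o = o' := yonedaEquiv.symm.injective (by rw [← hshape o f, ← hshape o' f', h'])
    rw [(hξ c o).hom_ext h']
  · intro x
    have hx : yonedaEquiv.symm x ≫ F.map (terminal.from X) =
        ξ c ((F.map (terminal.from X)).app c x) ≫ F.map (terminal.from _) := by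
      rw [hξo, yonedaEquiv_symm_naturality_right]
    obtain ⟨l, hl, -⟩ := hξ c _ _ hx
    exact ⟨⟨_, l⟩, (congrArg yonedaEquiv hl).trans (yonedaEquiv.apply_symm_apply x)⟩

theorem map_app_decode {X W : A} (u : X ⟶ W) (c : Cᵒᵖ) (w : Σ o, (B c o ⟶ X)) :
    (F.map u).app c (decode ξ X c w) = decode ξ W c ⟨w.1, w.2 ≫ u⟩ := by
  rw [decode, decode, ← yonedaEquiv_comp, F.map_comp, Category.assoc]

theorem obj_map_decode (X : A) {c c' : Cᵒᵖ} (γ : c ⟶ c') (o : (F.obj (⊤_ A)).obj c)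
    (f : B c o ⟶ X) :
    (F.obj X).map γ (decode ξ X c ⟨o, f⟩) =
      decode ξ X c' ⟨(F.obj (⊤_ A)).map γ o,
        (arity ξ hξ hξo).map (Quiver.Hom.op (⟨γ, rfl⟩ : (F.obj (⊤_ A)).elementsMk c o ⟶
          (F.obj (⊤_ A)).elementsMk c' ((F.obj (⊤_ A)).map γ o))) ≫ f⟩ := by
  have h := transition_spec ξ hξ hξo (⟨γ, rfl⟩ : (F.obj (⊤_ A)).elementsMk c o ⟶
    (F.obj (⊤_ A)).elementsMk c' ((F.obj (⊤_ A)).map γ o))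
  exact (yonedaEquiv_naturality' _ γ).trans (congrArg yonedaEquiv
    (((reassoc_of% h) (F.map f)).symm.trans (congrArg _ (F.map_comp _ _).symm)))

noncomputable def decodeEquiv (X : A) (c : Cᵒᵖ) :
    (F.obj X).obj c ≃
      Σ o : (F.obj (⊤_ A)).obj c, ((arity ξ hξ hξo).obj (op ((F.obj (⊤_ A)).elementsMk c o)) ⟶ X) :=
  (Equiv.ofBijective _ (decode_bijective ξ hξ hξo X c)).symm

theorem decodeEquiv_decode (X : A) (c : Cᵒᵖ) (w : Σ o, (B c o ⟶ X)) :
    decodeEquiv ξ hξ hξo X c (decode ξ X c w) = w :=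
  Equiv.ofBijective_symm_apply_apply _ _ w

theorem decodeEquiv_map_app (X W : A) (u : X ⟶ W) (c : Cᵒᵖ) (x : (F.obj X).obj c) :
    decodeEquiv ξ hξ hξo W c ((F.map u).app c x) =
      ⟨(decodeEquiv ξ hξ hξo X c x).1, (decodeEquiv ξ hξ hξo X c x).2 ≫ u⟩ := by
  obtain ⟨w, rfl⟩ := (decode_bijective ξ hξ hξo X c).surjective x
  rw [map_app_decode, decodeEquiv_decode, decodeEquiv_decode]
  rfl

theorem decodeEquiv_obj_map (X : A) (c c' : Cᵒᵖ) (γ : c ⟶ c') (x : (F.obj X).obj c) :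
    decodeEquiv ξ hξ hξo X c' ((F.obj X).map γ x) =
      ⟨(F.obj (⊤_ A)).map γ (decodeEquiv ξ hξ hξo X c x).1,
        (arity ξ hξ hξo).map (Quiver.Hom.op
          (⟨γ, rfl⟩ : (F.obj (⊤_ A)).elementsMk c (decodeEquiv ξ hξ hξo X c x).1 ⟶
            (F.obj (⊤_ A)).elementsMk c' ((F.obj (⊤_ A)).map γ (decodeEquiv ξ hξ hξo X c x).1))) ≫
          (decodeEquiv ξ hξ hξo X c x).2⟩ := by
  obtain ⟨⟨o, f⟩, rfl⟩ := (decode_bijective ξ hξ hξo X c).surjective x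
  rw [decodeEquiv_decode, obj_map_decode ξ hξ hξo, decodeEquiv_decode]
  rfl

end GenericArity

theorem IsFamilial.exists_isGeneric_factorization {C : Type} [SmallCategory C]
    {F : (Cᵒᵖ ⥤ Type) ⥤ (Cᵒᵖ ⥤ Type)} (hF : IsFamilial F) {X Y : Cᵒᵖ ⥤ Type}
    (g : Y ⟶ F.obj X) :
    ∃ (B : Cᵒᵖ ⥤ Type) (ξ : Y ⟶ F.obj B) (φ : B ⟶ X), IsGeneric F ξ ∧ ξ ≫ F.map φ = g := by
  obtain ⟨E, i, hmap, hobj⟩ := hF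
  exact FamilialRepresentation.exists_isGeneric_factorization i hmap hobj g

open GenericArity in
theorem isFamilial_of_isUniversal {C : Type} [SmallCategory C]
    {F : (Cᵒᵖ ⥤ Type) ⥤ (Cᵒᵖ ⥤ Type)} {B : ∀ c : Cᵒᵖ, (F.obj (⊤_ (Cᵒᵖ ⥤ Type))).obj c → Cᵒᵖ ⥤ Type}
    (ξ : ∀ (c : Cᵒᵖ) (o : (F.obj (⊤_ (Cᵒᵖ ⥤ Type))).obj c), yoneda.obj c.unop ⟶ F.obj (B c o))
    (hξ : ∀ c o, IsUniversal (terminalProjection F) (ξ c o))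
    (hξo : ∀ c o, ξ c o ≫ F.map (terminal.from _) = yonedaEquiv.symm o) : IsFamilial F :=
  ⟨arity ξ hξ hξo, decodeEquiv ξ hξ hξo, decodeEquiv_map_app ξ hξ hξo, decodeEquiv_obj_map ξ hξ hξo⟩

/-- a functor `F : psh(C) ⥤ psh(C)` is familial iff every morphism
`g : Y ⟶ F(X)` admits a generic-free factorisation. -/
theorem stmt14 {C : Type} [SmallCategory C] (F : (Cᵒᵖ ⥤ Type) ⥤ (Cᵒᵖ ⥤ Type)) :
    IsFamilial F ↔
      ∀ (X Y : Cᵒᵖ ⥤ Type) (g : Y ⟶ F.obj X),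
        ∃ (B : Cᵒᵖ ⥤ Type) (ξ : Y ⟶ F.obj B) (φ : B ⟶ X),
          IsGeneric F ξ ∧ ξ ≫ F.map φ = g := by
  refine ⟨fun hF X Y g => hF.exists_isGeneric_factorization g, fun H => ?_⟩
  choose B ξ φ hgen hfac using fun (c : Cᵒᵖ) (o : (F.obj (⊤_ (Cᵒᵖ ⥤ Type))).obj c) =>
    H _ (yoneda.obj c.unop) (yonedaEquiv.symm o)
  refine isFamilial_of_isUniversal ξ (fun c o => IsGeneric.isUniversal (hgen c o)) fun c o => ?_
  rw [← hfac c o, terminal.hom_ext (terminal.from _) (φ c o)]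
end

section
/- Let T be a monad on presheaves over Γ_A such that T preserves functional bisimulations, and let α : T(X) → X be a compositional T-algebra (α is a functional bisimulation). Then bisimilarity ∼_X on X is a congruence: the canonical morphism T(∼_X) → X² given by α² ∘ ⟨T(π₁), T(π₂)⟩ ∘ T(m) factors through the monomorphism m : ∼_X ↪ X². -/
open CategoryTheory Limits Opposite


inductive GObj (A : Type) : Type
  | star : GObj A
  | lab (a : A) : GObj A

inductive GHom (A : Type) : GObj A → GObj A → Type
  | id (x : GObj A) : GHom A x x
  | s (a : A) : GHom A .star (.lab a)
  | t (a : A) : GHom A .star (.lab a)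

def GHom.comp {A : Type} : ∀ {x y z : GObj A}, GHom A x y → GHom A y z → GHom A x z
  | _, _, _, .id _, g => g
  | _, _, _, .s a, .id _ => .s a
  | _, _, _, .t a, .id _ => .t a

instance (A : Type) : Category (GObj A) where
  Hom := GHom A
  id := GHom.id
  comp := GHom.comp
  id_comp f := rfl
  comp_id f := by cases f <;> rfl
  assoc f g h := by cases f <;> cases g <;> cases h <;> rfl

abbrev Psh (A : Type) := (GObj A)ᵒᵖ ⥤ Type

def FunctionalBisim {A : Type} {X Y : Psh A} (f : X ⟶ Y) : Prop :=
  ∀ a : A, HasLiftingProperty (yoneda.map (GHom.s a : (GObj.star : GObj A) ⟶ GObj.lab a)) f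

/-! Both components of `T(∼_X) ⟶ X²` are composites `α ∘ T(πᵢ ∘ m)` of functional
bisimulations, so its image is a bisimulation relation and therefore lies in `∼_X`.
Passing to the image is harmless because functional bisimulations descend along
epimorphisms: the domain `y⋆` of the generating maps is representable, hence projective. -/

universe u v

instance CategoryTheory.projective_yoneda_obj {C : Type u} [Category.{v} C] (c : C) :
    Projective (yoneda.obj c) where
  factors f e _ := by
    obtain ⟨x, hx⟩ := (epi_iff_surjective (e.app (op c))).mp inferInstance (yonedaEquiv f)
    refine ⟨yonedaEquiv.symm x, yonedaEquiv.injective ?_⟩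
    rw [yonedaEquiv_comp, Equiv.apply_symm_apply, hx]

theorem CategoryTheory.HasLiftingProperty.of_epi_comp {C : Type u} [Category.{v} C]
    {P Q R I X : C} (i : P ⟶ Q) [Projective P] (e : R ⟶ I) [Epi e] (g : I ⟶ X)
    [HasLiftingProperty i (e ≫ g)] : HasLiftingProperty i g where
  sq_hasLift {u v} sq := by
    have sq' : CommSq (Projective.factorThru u e) i (e ≫ g) v :=
      ⟨by rw [Projective.factorThru_comp_assoc, sq.w]⟩
    exact ⟨⟨{ l := sq'.lift ≫ e
              fac_left := by rw [sq'.fac_left_assoc, Projective.factorThru_comp]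
              fac_right := by rw [Category.assoc, sq'.fac_right] }⟩⟩

namespace FunctionalBisim

variable {A : Type} {X Y Z : Psh A}

theorem comp {f : X ⟶ Y} {g : Y ⟶ Z} (hf : FunctionalBisim f) (hg : FunctionalBisim g) :
    FunctionalBisim (f ≫ g) := fun a =>
  have := hf a
  have := hg a
  inferInstance

theorem of_epi_comp (e : X ⟶ Y) [Epi e] {g : Y ⟶ Z} (h : FunctionalBisim (e ≫ g)) :
    FunctionalBisim g := fun a =>
  have := h a
  HasLiftingProperty.of_epi_comp _ e g

theorem range_ι_comp {f : X ⟶ Y} {g : Y ⟶ Z} (h : FunctionalBisim (f ≫ g)) :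
    FunctionalBisim ((Subfunctor.range f).ι ≫ g) :=
  of_epi_comp (Subfunctor.toRange f) (by rwa [Subfunctor.toRange_ι_assoc])

end FunctionalBisim

def IsBisimulation {A : Type} {R X : Psh A} (r : R ⟶ X ⨯ X) : Prop :=
  FunctionalBisim (r ≫ prod.fst) ∧ FunctionalBisim (r ≫ prod.snd)

theorem IsBisimulation.range_ι {A : Type} {R X : Psh A} {r : R ⟶ X ⨯ X}
    (h : IsBisimulation r) : IsBisimulation (Subfunctor.range r).ι :=
  ⟨h.1.range_ι_comp, h.2.range_ι_comp⟩

theorem stmt16_general {A : Type} (T : Monad (Psh A))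
    (hT : ∀ {X Y : Psh A} (f : X ⟶ Y), FunctionalBisim f →
      FunctionalBisim ((T : Psh A ⥤ Psh A).map f))
    {X : Psh A} (α : (T : Psh A ⥤ Psh A).obj X ⟶ X)
    (hcomp : FunctionalBisim α)
    (Sim : Psh A) (m : Sim ⟶ X ⨯ X)
    (hfst : FunctionalBisim (m ≫ prod.fst))
    (hsnd : FunctionalBisim (m ≫ prod.snd))
    (hlargest : ∀ (R : Psh A) (m' : R ⟶ X ⨯ X), Mono m' →
      FunctionalBisim (m' ≫ prod.fst) → FunctionalBisim (m' ≫ prod.snd) →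
        ∃ h : R ⟶ Sim, h ≫ m = m') :
    ∃ h : (T : Psh A ⥤ Psh A).obj Sim ⟶ Sim,
      h ≫ m = (T : Psh A ⥤ Psh A).map m ≫
        prod.lift ((T : Psh A ⥤ Psh A).map prod.fst) ((T : Psh A ⥤ Psh A).map prod.snd) ≫
        prod.map α α := by
  set f := (T : Psh A ⥤ Psh A).map m ≫
    prod.lift ((T : Psh A ⥤ Psh A).map prod.fst) ((T : Psh A ⥤ Psh A).map prod.snd) ≫
    prod.map α α
  have hf : IsBisimulation f := by
    constructor
    · simpa only [f, Category.assoc, prod.map_fst, prod.lift_fst_assoc, Functor.map_comp]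
        using (hT _ hfst).comp hcomp
    · simpa only [f, Category.assoc, prod.map_snd, prod.lift_snd_assoc, Functor.map_comp]
        using (hT _ hsnd).comp hcomp
  obtain ⟨h, hh⟩ := hlargest _ _ inferInstance hf.range_ι.1 hf.range_ι.2
  exact ⟨Subfunctor.toRange f ≫ h, by rw [Category.assoc, hh, Subfunctor.toRange_ι]⟩

/-- if `T` preserves functional bisimulations and `α : T(X) ⟶ X` is a
compositional algebra, then bisimilarity `∼_X` (the largest bisimulation) is a
congruence: `α² ∘ ⟨T(π₁), T(π₂)⟩ ∘ T(m)` factors through `m : ∼_X ↪ X²`. -/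
theorem stmt16 {A : Type} (T : Monad (Psh A))
    (hT : ∀ {X Y : Psh A} (f : X ⟶ Y), FunctionalBisim f →
      FunctionalBisim ((T : Psh A ⥤ Psh A).map f))
    {X : Psh A} (α : (T : Psh A ⥤ Psh A).obj X ⟶ X)
    (hunit : T.η.app X ≫ α = 𝟙 X)
    (hmul : T.μ.app X ≫ α = (T : Psh A ⥤ Psh A).map α ≫ α)
    (hcomp : FunctionalBisim α)
    (Sim : Psh A) (m : Sim ⟶ X ⨯ X) [Mono m]
    (hfst : FunctionalBisim (m ≫ prod.fst))
    (hsnd : FunctionalBisim (m ≫ prod.snd))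
    (hlargest : ∀ (R : Psh A) (m' : R ⟶ X ⨯ X), Mono m' →
      FunctionalBisim (m' ≫ prod.fst) → FunctionalBisim (m' ≫ prod.snd) →
        ∃ h : R ⟶ Sim, h ≫ m = m') :
    ∃ h : (T : Psh A ⥤ Psh A).obj Sim ⟶ Sim,
      h ≫ m = (T : Psh A ⥤ Psh A).map m ≫
        prod.lift ((T : Psh A ⥤ Psh A).map prod.fst) ((T : Psh A ⥤ Psh A).map prod.snd) ≫
        prod.map α α :=
  stmt16_general T hT α hcomp Sim m hfst hsnd hlargest
end
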